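/- Energy identity for a trapped gas: assume Φ(a, α, μ, T) satisfies -∑_i a_i ∂Φ/∂a_i + (2+ν) α ∂Φ/∂α + 2∑_j μ_j ∂Φ/∂μ_j + 2T ∂Φ/∂T = 2Φ, together with Φ = E - TS - ∑_j μ_j N_j, S = -∂Φ/∂T, N_j = -∂Φ/∂μ_j, and V = α ∂Φ/∂α (trapping energy). Then E = ((2+ν)/2) V - (1/2) ∑_i a_i ∂Φ/∂a_i. -/

import Mathlib

open Finset

/-- Energy identity `E = ((2+ν)/2)V - (1/2)∑ aᵢ ∂Φ/∂aᵢ` for a trapped gas, obtained by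
combining the Euler scaling identity with the thermodynamic relations. -/
theorem energy_identity_trapped
    (m n : ℕ) (ν : ℝ) (a DΦa : Fin m → ℝ) (μ DΦμ Npart : Fin n → ℝ)
    (α DΦα T DΦT S V E Φ : ℝ)
    (hEuler : -(∑ i, a i * DΦa i) + (2 + ν) * (α * DΦα)
        + 2 * ∑ j, μ j * DΦμ j + 2 * T * DΦT = 2 * Φ)
    (hΦ : Φ = E - T * S - ∑ j, μ j * Npart j)
    (hS : DΦT = -S)
    (hN : ∀ j, DΦμ j = -Npart j)
    (hV : V = α * DΦα) :
    E = (2 + ν) / 2 * V - (1 / 2) * ∑ i, a i * DΦa i := by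
  -- the `μ` and `T` terms of the Euler identity cancel those of `2Φ`, leaving `2E = (2+ν)V - I`
  simp only [hN, hS, mul_neg, sum_neg_distrib] at hEuler
  subst hΦ hV
  linarith
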